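/- arXiv:2411.12553 — 3 statements merged into one kernel-verified Lean document; each statement's English description precedes it below -/
import Mathlib

section
/- For q an odd prime and 0 ≤ u ≤ (q−1)/4, we have (1/(q(2u+1)²)) ∑_{x ∈ Z/qZ} N_S(x)² = (2/3)·(2u+1)/q + 1/(3q(2u+1)), where S = {−u,...,u}. -/
/-!
The sum `∑ₓ N_S(x)²` is the additive energy of `S`. Since `4u < q`, reduction mod `q` is injective
on `[-2u, 2u] ⊇ S + S` (a Freiman isomorphism), so the energy of `S` equals that of the integer
interval `[-u, u]`. There the representation function is the tent `t ↦ 2u + 1 - |t|` on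
`[-2u, 2u]`, and the sum of its squares is `n(2n² + 1)/3` with `n = 2u + 1`.
-/

open Finset

/-- `N_S(x)`: the number of ordered pairs `(a,b) ∈ S × S` with `a + b = x` in `ℤ/qℤ`. -/
def NS {q : ℕ} [NeZero q] (S : Finset (ZMod q)) (x : ZMod q) : ℕ :=
  ((S ×ˢ S).filter (fun ab => ab.1 + ab.2 = x)).card

/-- The interval `{−u,...,u} ⊆ ℤ/qℤ`. -/
noncomputable def intervalS (q : ℕ) [NeZero q] (u : ℕ) : Finset (ZMod q) :=
  (Finset.Icc (-(u : ℤ)) (u : ℤ)).image (fun a : ℤ => (a : ZMod q))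

open scoped Pointwise Combinatorics.Additive

namespace Finset

variable {G H : Type*} [AddCommGroup G] [AddCommGroup H] [DecidableEq G] [DecidableEq H]

lemma card_filter_add_eq (s : Finset G) (a : G) :
    #{xy ∈ s ×ˢ s | xy.1 + xy.2 = a} = #{x ∈ s | a - x ∈ s} := by
  refine card_nbij' Prod.fst (fun x => (x, a - x)) ?_ ?_ ?_ ?_
  · rintro ⟨x, y⟩ h
    simp only [mem_coe, mem_filter, mem_product] at h ⊢
    obtain ⟨⟨hx, hy⟩, rfl⟩ := h
    simpa using And.intro hx hy
  · intro x h
    simp only [mem_coe, mem_filter, mem_product] at h ⊢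
    exact ⟨h, by abel⟩
  · rintro ⟨x, y⟩ h
    simp only [mem_coe, mem_filter, mem_product] at h
    obtain ⟨-, rfl⟩ := h
    simp
  · intro x _
    rfl

lemma addEnergy_eq_sum_sq_of_add_subset {s T : Finset G} (h : s + s ⊆ T) :
    E[s] = ∑ a ∈ T, #{xy ∈ s ×ˢ s | xy.1 + xy.2 = a} ^ 2 := by
  rw [addEnergy_eq_sum_sq']
  refine sum_subset h fun a _ ha => ?_
  rw [sq_eq_zero_iff, card_eq_zero, filter_eq_empty_iff]
  rintro ⟨x, y⟩ hxy rfl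
  rw [mem_product] at hxy
  exact ha (add_mem_add hxy.1 hxy.2)

omit [DecidableEq H] in
lemma injOn_of_injOn_add_self {f : G →+ H} {s : Finset G} (hf : Set.InjOn f (s + s : Finset G)) :
    Set.InjOn f s := by
  rcases s.eq_empty_or_nonempty with rfl | ⟨c, hc⟩
  · simp
  intro a ha b hb hab
  have := hf (add_mem_add ha hc) (add_mem_add hb hc) (by simp [hab])
  simpa using this

lemma addEnergy_image_of_injOn (f : G →+ H) {s : Finset G} (hf : Set.InjOn f (s + s : Finset G)) :
    E[s.image f] = E[s] := by
  have hs := injOn_of_injOn_add_self hf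
  symm
  refine card_bij (fun x _ => ((f x.1.1, f x.1.2), (f x.2.1, f x.2.2))) ?_ ?_ ?_
  · rintro ⟨⟨a₁, a₂⟩, b₁, b₂⟩ h
    simp only [mem_filter, mem_product] at h ⊢
    refine ⟨⟨⟨mem_image_of_mem f h.1.1.1, mem_image_of_mem f h.1.1.2⟩,
      mem_image_of_mem f h.1.2.1, mem_image_of_mem f h.1.2.2⟩, ?_⟩
    rw [← map_add, ← map_add, h.2]
  · rintro ⟨⟨a₁, a₂⟩, b₁, b₂⟩ h ⟨⟨a₁', a₂'⟩, b₁', b₂'⟩ h' he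
    simp only [mem_filter, mem_product] at h h'
    simp only [Prod.mk.injEq] at he ⊢
    exact ⟨⟨hs h.1.1.1 h'.1.1.1 he.1.1, hs h.1.1.2 h'.1.1.2 he.1.2⟩,
      hs h.1.2.1 h'.1.2.1 he.2.1, hs h.1.2.2 h'.1.2.2 he.2.2⟩
  · rintro ⟨⟨x₁, x₂⟩, y₁, y₂⟩ h
    simp only [mem_filter, mem_product, mem_image] at h
    obtain ⟨⟨⟨⟨a₁, ha₁, rfl⟩, a₂, ha₂, rfl⟩, ⟨b₁, hb₁, rfl⟩, b₂, hb₂, rfl⟩, he⟩ := h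
    rw [← map_add, ← map_add] at he
    refine ⟨((a₁, a₂), b₁, b₂), ?_, rfl⟩
    simp only [mem_filter, mem_product]
    exact ⟨⟨⟨ha₁, ha₂⟩, hb₁, hb₂⟩, hf (add_mem_add ha₁ hb₁) (add_mem_add ha₂ hb₂) he⟩

end Finset

lemma sum_Icc_neg_sq_sub_abs (c : ℤ) (m : ℕ) :
    3 * ∑ t ∈ Icc (-(m : ℤ)) m, (c - |t|) ^ 2 =
      3 * (2 * m + 1) * c ^ 2 - 6 * m * (m + 1) * c + m * (m + 1) * (2 * m + 1) := by
  induction m with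
  | zero => simp
  | succ m ih =>
    have hIcc : Icc (-((m + 1 : ℕ) : ℤ)) (m + 1 : ℕ) =
        insert (-((m : ℤ) + 1)) (insert ((m : ℤ) + 1) (Icc (-(m : ℤ)) m)) := by
      ext t; simp only [mem_Icc, mem_insert]; omega
    rw [hIcc, sum_insert (by simp; omega), sum_insert (by simp), abs_neg,
      abs_of_nonneg (by positivity)]
    push_cast
    linear_combination ih

lemma card_filter_sub_mem_Icc_neg (u : ℕ) {t : ℤ} (ht : t ∈ Icc (-(2 * u : ℤ)) (2 * u)) :
    (#{x ∈ Icc (-(u : ℤ)) u | t - x ∈ Icc (-(u : ℤ)) u} : ℤ) = 2 * u + 1 - |t| := by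
  have h : {x ∈ Icc (-(u : ℤ)) u | t - x ∈ Icc (-(u : ℤ)) u} =
      Icc (max (-(u : ℤ)) (t - u)) (min (u : ℤ) (t + u)) := by
    ext x; simp only [mem_filter, mem_Icc]; omega
  rw [mem_Icc] at ht
  rw [h, Int.card_Icc]
  rcases le_total 0 t with h | h
  · rw [abs_of_nonneg h]; omega
  · rw [abs_of_nonpos h]; omega

lemma Icc_neg_add_Icc_neg_subset (a : ℤ) : Icc (-a) a + Icc (-a) a ⊆ Icc (-(2 * a)) (2 * a) := by
  convert Icc_add_Icc_subset (-a) a (-a) a using 2 <;> ring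

lemma addEnergy_Icc_neg (u : ℕ) :
    3 * (E[Icc (-(u : ℤ)) u] : ℤ) = (2 * u + 1) * (2 * (2 * u + 1) ^ 2 + 1) := by
  have htent : ∀ t ∈ Icc (-(2 * u : ℤ)) (2 * u),
      ((#{xy ∈ Icc (-(u : ℤ)) u ×ˢ Icc (-(u : ℤ)) u | xy.1 + xy.2 = t} : ℕ) : ℤ) ^ 2 =
        (2 * u + 1 - |t|) ^ 2 := fun t ht => by
    rw [card_filter_add_eq, card_filter_sub_mem_Icc_neg u ht]
  have hsum := sum_Icc_neg_sq_sub_abs (2 * u + 1) (2 * u)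
  push_cast at hsum
  rw [addEnergy_eq_sum_sq_of_add_subset (Icc_neg_add_Icc_neg_subset (u : ℤ))]
  push_cast
  rw [sum_congr rfl htent]
  linear_combination hsum

lemma intCast_zmod_injOn_Icc_neg {q : ℕ} {a : ℤ} (h : 2 * a < q) :
    Set.InjOn (Int.cast : ℤ → ZMod q) (Icc (-a) a) := by
  intro x hx y hy hxy
  simp only [coe_Icc, Set.mem_Icc] at hx hy
  rw [ZMod.intCast_eq_intCast_iff_dvd_sub] at hxy
  have := Int.eq_zero_of_abs_lt_dvd hxy (by rw [abs_lt]; omega)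
  omega

theorem stmt8_general (q : ℕ) [Fact q.Prime] (u : ℕ) (hu : 4 * u ≤ q - 1) :
    (1 / ((q : ℝ) * (2 * u + 1) ^ 2)) * ∑ x : ZMod q, (NS (intervalS q u) x : ℝ) ^ 2 =
      (2 / 3) * (2 * u + 1) / q + 1 / (3 * q * (2 * u + 1)) := by
  have hq : 0 < q := Nat.pos_of_neZero q
  have hE : ∑ x : ZMod q, NS (intervalS q u) x ^ 2 = E[Icc (-(u : ℤ)) u] := by
    rw [← addEnergy_image_of_injOn (Int.castAddHom (ZMod q))
      ((intCast_zmod_injOn_Icc_neg (a := 2 * u) (by omega)).mono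
        (coe_subset.mpr (Icc_neg_add_Icc_neg_subset u))), addEnergy_eq_sum_sq]
    rfl
  have hE3 := addEnergy_Icc_neg u
  rw [← hE] at hE3
  have hR : 3 * ∑ x : ZMod q, (NS (intervalS q u) x : ℝ) ^ 2 =
      (2 * u + 1) * (2 * (2 * u + 1) ^ 2 + 1) := by exact_mod_cast hE3
  field_simp
  linear_combination hR

theorem stmt8 (q : ℕ) [Fact q.Prime] (hodd : Odd q) (u : ℕ) (hu : 4 * u ≤ q - 1) :
    (1 / ((q : ℝ) * (2 * u + 1) ^ 2)) * ∑ x : ZMod q, (NS (intervalS q u) x : ℝ) ^ 2 =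
      (2 / 3) * (2 * u + 1) / q + 1 / (3 * q * (2 * u + 1)) :=
  stmt8_general q u hu
end

section
/- For q an odd prime, u with (q−1)/4 < u ≤ (q−1)/2, and ℓ = q − (2u+1), the collision count N_S(x) for S = {−u,...,u} ⊆ Z/qZ equals (2u+1) − |x| for x ∈ {−ℓ,...,ℓ} and equals (2u+1) − ℓ for x ∉ {−ℓ,...,ℓ}. -/
open Finset

lemma card_Icc_product_filter_add_eq (u : ℕ) (t : ℤ) :
    #{p ∈ Icc (-(u : ℤ)) u ×ˢ Icc (-(u : ℤ)) u | p.1 + p.2 = t} = (2 * u + 1 - |t|).toNat := by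
  have himage : {p ∈ Icc (-(u : ℤ)) u ×ˢ Icc (-(u : ℤ)) u | p.1 + p.2 = t}
      = (Icc (max (-(u : ℤ)) (t - u)) (min (u : ℤ) (t + u))).image (fun a => (a, t - a)) := by
    ext ⟨a, b⟩
    simp only [mem_filter, mem_product, mem_Icc, mem_image, Prod.mk.injEq, max_le_iff, le_min_iff]
    constructor
    · rintro ⟨⟨⟨h1, h2⟩, h3, h4⟩, h5⟩
      exact ⟨a, ⟨⟨h1, by omega⟩, h2, by omega⟩, rfl, by omega⟩
    · rintro ⟨c, ⟨⟨h1, h2⟩, h3, h4⟩, rfl, rfl⟩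
      exact ⟨⟨⟨h1, h3⟩, by omega, by omega⟩, by ring⟩
  rw [himage, card_image_of_injective _ fun a b h => (Prod.mk.inj h).1, Int.card_Icc,
    Int.abs_eq_natAbs]
  omega

lemma NS_image_intCast {q : ℕ} [NeZero q] {T : Finset ℤ}
    (hT : Set.InjOn (Int.cast : ℤ → ZMod q) T) (x : ZMod q) :
    NS (T.image Int.cast) x = #{p ∈ T ×ˢ T | ((p.1 + p.2 : ℤ) : ZMod q) = x} := by
  rw [NS, ← prodMap_image_product, filter_image, card_image_of_injOn]
  · simp only [Prod.map_fst, Prod.map_snd, Int.cast_add]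
  · exact (hT.prodMap hT).mono fun p hp => by simpa using (mem_filter.1 hp).1

lemma intCast_injOn_Icc {q u : ℕ} (h : 2 * u < q) :
    Set.InjOn (Int.cast : ℤ → ZMod q) (Icc (-(u : ℤ)) u) := by
  intro a ha b hb hab
  simp only [coe_Icc, Set.mem_Icc] at ha hb
  have := Int.eq_zero_of_abs_lt_dvd ((ZMod.intCast_eq_intCast_iff_dvd_sub a b q).1 hab)
    (by rw [abs_lt]; omega)
  omega

lemma intCast_eq_intCast_iff_mem_of_abs_sub_lt {q : ℕ} {s t : ℤ} (h : |s - t| < 2 * q) :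
    (s : ZMod q) = t ↔ s ∈ ({t - q, t, t + q} : Finset ℤ) := by
  rw [ZMod.intCast_eq_intCast_iff_dvd_sub]
  simp only [mem_insert, mem_singleton]
  constructor
  · rintro ⟨k, hk⟩
    obtain ⟨h1, h2⟩ := abs_lt.1 h
    have hk1 : -2 < k := by nlinarith
    have hk2 : k < 2 := by nlinarith
    interval_cases k <;> omega
  · rintro (rfl | rfl | rfl) <;> simp

lemma card_filter_intCast_add_eq_sum {q u : ℕ} (hu : 2 * u < q) {v : ℤ} (hv : 2 * |v| ≤ q) :
    #{p ∈ Icc (-(u : ℤ)) u ×ˢ Icc (-(u : ℤ)) u | ((p.1 + p.2 : ℤ) : ZMod q) = v} =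
      ∑ t ∈ {v - q, v, v + q}, #{p ∈ Icc (-(u : ℤ)) u ×ˢ Icc (-(u : ℤ)) u | p.1 + p.2 = t} := by
  have hcong : ∀ p ∈ Icc (-(u : ℤ)) u ×ˢ Icc (-(u : ℤ)) u,
      ((p.1 + p.2 : ℤ) : ZMod q) = v ↔ p.1 + p.2 ∈ ({v - q, v, v + q} : Finset ℤ) := by
    intro p hp
    simp only [mem_product, mem_Icc] at hp
    rw [Int.abs_eq_natAbs] at hv
    exact intCast_eq_intCast_iff_mem_of_abs_sub_lt (by rw [abs_lt]; omega)
  rw [filter_congr hcong, card_eq_sum_card_fiberwise (f := fun p : ℤ × ℤ => p.1 + p.2)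
    (t := {v - q, v, v + q}) fun p hp => mem_coe.2 (mem_filter.1 hp).2]
  refine sum_congr rfl fun t ht => ?_
  rw [filter_filter]
  exact congrArg card (filter_congr fun p _ => ⟨And.right, fun h => ⟨by rwa [← h] at ht, h⟩⟩)

theorem stmt11_general (q : ℕ) [Fact q.Prime] (u : ℕ)
    (hu1 : q - 1 < 4 * u) (hu2 : 2 * u ≤ q - 1) (x : ZMod q) :
    (NS (intervalS q u) x : ℤ) =
      if |x.valMinAbs| ≤ (q : ℤ) - (2 * u + 1) then
        (2 * u + 1 : ℤ) - |x.valMinAbs|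
      else (2 * u + 1 : ℤ) - ((q : ℤ) - (2 * u + 1)) := by
  have hu : 2 * u < q := by omega
  have hv : 2 * |x.valMinAbs| ≤ q := by
    have := ZMod.natAbs_valMinAbs_le x
    rw [Int.abs_eq_natAbs]
    omega
  conv_lhs => rw [← ZMod.coe_valMinAbs x]
  rw [intervalS, NS_image_intCast (intCast_injOn_Icc hu), card_filter_intCast_add_eq_sum hu hv,
    sum_insert (by simp only [mem_insert, mem_singleton]; omega),
    sum_insert (by simp only [mem_singleton]; omega), sum_singleton]
  simp only [card_Icc_product_filter_add_eq, Int.abs_eq_natAbs] at hv ⊢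
  split_ifs <;> omega

theorem stmt11 (q : ℕ) [Fact q.Prime] (hodd : Odd q) (u : ℕ)
    (hu1 : q - 1 < 4 * u) (hu2 : 2 * u ≤ q - 1) (x : ZMod q) :
    (NS (intervalS q u) x : ℤ) =
      if |x.valMinAbs| ≤ (q : ℤ) - (2 * u + 1) then
        (2 * u + 1 : ℤ) - |x.valMinAbs|
      else (2 * u + 1 : ℤ) - ((q : ℤ) - (2 * u + 1)) :=
  stmt11_general q u hu1 hu2 x
end

section
/- Let S ⊆ F_q be a Sidon-type set, i.e., all sums a+b with a,b ∈ S and a ≤ b (for some fixed linear order) are pairwise distinct. For any nonnegative function g : F_q → ℝ supported on S with ∑_a g(a)² = 1, we have ∑_{x ∈ F_q} (g ⋆ g)(x)² ≤ 2 − 1/|S|, with equality when g = |S|^{-1/2}·1_S. -/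
/-!
Expanding the square, `∑ₓ (g ⋆ g)(x)²` is the additive energy `∑_{a+b=c+d} g a g b g c g d`.
On a Sidon set the only solutions are the trivial ones `{c, d} = {a, b}`, which gives
`∑ₓ (g ⋆ g)(x)² = 2 (∑ g²)² - ∑ g⁴`. With `∑ g² = 1`, Cauchy–Schwarz on `S` gives
`∑ g⁴ ≥ 1 / |S|`, with equality for the normalised indicator of `S`.
-/

open Finset

/-- Real convolution `(g ⋆ h)(x) = ∑_y g(y) h(x−y)` on `F_q`. -/
def convR {F : Type} [Field F] [Fintype F] (g h : F → ℝ) (x : F) : ℝ :=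
  ∑ y : F, g y * h (x - y)

def IsSidonSet {G : Type*} [Add G] (S : Finset G) : Prop :=
  ∀ a b c d : G, a ∈ S → b ∈ S → c ∈ S → d ∈ S → a + b = c + d →
    (a = c ∧ b = d) ∨ (a = d ∧ b = c)

lemma sum_sq_sum_mul_apply_sub {G : Type*} [AddCommGroup G] [Fintype G] (g : G → ℝ) :
    ∑ x, (∑ y, g y * g (x - y)) ^ 2 =
      ∑ a, ∑ b, g a * g b * ∑ c, g c * g (a + b - c) := by
  simp_rw [sq, sum_mul_sum]
  rw [sum_comm]
  refine sum_congr rfl fun a _ => ?_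
  rw [← Equiv.sum_comp (Equiv.addLeft a)]
  refine sum_congr rfl fun b _ => ?_
  simp only [Equiv.coe_addLeft, add_sub_cancel_left, mul_sum]

section Energy

variable {G : Type*} [AddCommGroup G] [Fintype G] [DecidableEq G]
  {S : Finset G} {g : G → ℝ}

lemma IsSidonSet.sum_mul_apply_add_sub (hS : IsSidonSet S) (hsupp : ∀ a, g a ≠ 0 → a ∈ S)
    {a b : G} (ha : a ∈ S) (hb : b ∈ S) :
    ∑ c, g c * g (a + b - c) = if a = b then g a ^ 2 else 2 * g a * g b := by
  have hvanish : ∀ c ∉ ({a, b} : Finset G), g c * g (a + b - c) = 0 := by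
    intro c hc
    by_contra hne
    obtain ⟨hc0, hd0⟩ := mul_ne_zero_iff.mp hne
    rcases hS a b c (a + b - c) ha hb (hsupp c hc0) (hsupp _ hd0) (by abel)
      with ⟨rfl, -⟩ | ⟨-, rfl⟩ <;> simp at hc
  rw [← sum_subset (subset_univ _) fun c _ hc => hvanish c hc]
  split_ifs with hab
  · subst hab
    simp [sq]
  · rw [sum_pair hab]
    simp only [add_sub_cancel_left, add_sub_cancel_right]
    ring

lemma IsSidonSet.mul_mul_sum_mul_apply_add_sub (hS : IsSidonSet S)
    (hsupp : ∀ a, g a ≠ 0 → a ∈ S) (a b : G) :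
    g a * g b * ∑ c, g c * g (a + b - c) =
      2 * (g a ^ 2 * g b ^ 2) - if a = b then g a ^ 4 else 0 := by
  by_cases ha : a ∈ S
  · by_cases hb : b ∈ S
    · rw [hS.sum_mul_apply_add_sub hsupp ha hb]
      split_ifs with hab
      · subst hab; ring
      · ring
    · have : g b = 0 := by_contra fun h => hb (hsupp b h)
      split_ifs with hab <;> simp_all
  · have : g a = 0 := by_contra fun h => ha (hsupp a h)
    split_ifs <;> simp [this]

lemma IsSidonSet.sum_sq_sum_mul_apply_sub (hS : IsSidonSet S)
    (hsupp : ∀ a, g a ≠ 0 → a ∈ S) :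
    ∑ x, (∑ y, g y * g (x - y)) ^ 2 = 2 * (∑ a, g a ^ 2) ^ 2 - ∑ a, g a ^ 4 := by
  simp_rw [_root_.sum_sq_sum_mul_apply_sub, hS.mul_mul_sum_mul_apply_add_sub hsupp,
    sum_sub_distrib, sum_ite_eq, if_pos (mem_univ _), sq (∑ a, g a ^ 2), sum_mul_sum, mul_sum]

end Energy

lemma sq_sum_sq_le_card_mul_sum_pow_four {ι : Type*} [Fintype ι] {S : Finset ι} {g : ι → ℝ}
    (hsupp : ∀ a, g a ≠ 0 → a ∈ S) :
    (∑ a, g a ^ 2) ^ 2 ≤ #S * ∑ a, g a ^ 4 := by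
  have hzero : ∀ n ≠ 0, ∀ a ∉ S, g a ^ n = 0 := fun n hn a ha =>
    pow_eq_zero_iff hn |>.mpr <| by_contra fun h => ha (hsupp a h)
  rw [← sum_subset (subset_univ S) fun a _ => hzero 2 two_ne_zero a,
    ← sum_subset (subset_univ S) fun a _ => hzero 4 four_ne_zero a]
  have hCS := sq_sum_le_card_mul_sum_sq (s := S) (f := fun a => g a ^ 2)
  simp only [← pow_mul] at hCS
  exact hCS

lemma sum_ite_mem_pow {ι : Type*} [Fintype ι] [DecidableEq ι] (S : Finset ι) (c : ℝ) {n : ℕ}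
    (hn : n ≠ 0) :
    ∑ a, (if a ∈ S then c else 0) ^ n = #S * c ^ n := by
  simp [ite_pow, zero_pow hn]

theorem stmt13_general {F : Type} [Field F] [Fintype F] [DecidableEq F]
    (S : Finset F) (hS : S.Nonempty)
    (hSidon : ∀ a b c d : F, a ∈ S → b ∈ S → c ∈ S → d ∈ S → a + b = c + d →
      (a = c ∧ b = d) ∨ (a = d ∧ b = c))
    (g : F → ℝ) (hsupp : ∀ a, g a ≠ 0 → a ∈ S)
    (hnorm : ∑ a : F, g a ^ 2 = 1) :
    (∑ x : F, convR g g x ^ 2 ≤ 2 - 1 / (S.card : ℝ)) ∧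
      (∑ x : F,
          convR (fun a => if a ∈ S then 1 / Real.sqrt (S.card : ℝ) else 0)
            (fun a => if a ∈ S then 1 / Real.sqrt (S.card : ℝ) else 0) x ^ 2 =
        2 - 1 / (S.card : ℝ)) := by
  have hSidonSet : IsSidonSet S := hSidon
  have hcard : (0 : ℝ) < #S := by exact_mod_cast hS.card_pos
  constructor
  · have hCS := sq_sum_sq_le_card_mul_sum_pow_four hsupp
    rw [hnorm, one_pow, ← div_le_iff₀' hcard] at hCS
    simp only [convR, hSidonSet.sum_sq_sum_mul_apply_sub hsupp, hnorm]
    linarith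
  · set c := 1 / Real.sqrt (#S : ℝ)
    have hc2 : c ^ 2 = 1 / #S := by rw [div_pow, one_pow, Real.sq_sqrt hcard.le]
    have hindicator : ∀ a, (if a ∈ S then c else 0) ≠ 0 → a ∈ S := fun a h =>
      by_contra fun ha => h (if_neg ha)
    simp only [convR, hSidonSet.sum_sq_sum_mul_apply_sub hindicator,
      sum_ite_mem_pow S c two_ne_zero, sum_ite_mem_pow S c four_ne_zero,
      show c ^ 4 = (c ^ 2) ^ 2 by ring, hc2]
    field_simp

theorem stmt13 {F : Type} [Field F] [Fintype F] [DecidableEq F]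
    (S : Finset F) (hS : S.Nonempty)
    (hSidon : ∀ a b c d : F, a ∈ S → b ∈ S → c ∈ S → d ∈ S → a + b = c + d →
      (a = c ∧ b = d) ∨ (a = d ∧ b = c))
    (g : F → ℝ) (hg0 : ∀ a, 0 ≤ g a) (hsupp : ∀ a, g a ≠ 0 → a ∈ S)
    (hnorm : ∑ a : F, g a ^ 2 = 1) :
    (∑ x : F, convR g g x ^ 2 ≤ 2 - 1 / (S.card : ℝ)) ∧
      (∑ x : F,
          convR (fun a => if a ∈ S then 1 / Real.sqrt (S.card : ℝ) else 0)
            (fun a => if a ∈ S then 1 / Real.sqrt (S.card : ℝ) else 0) x ^ 2 =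
        2 - 1 / (S.card : ℝ)) :=
  stmt13_general S hS hSidon g hsupp hnorm
end
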